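/- arXiv:1208.2758 — 8 statements merged into one kernel-verified Lean document; each statement's English description precedes it below -/
import Mathlib

section
/- There is no elementary cellular automaton (radius 1, binary) that solves the parity problem on all odd-sized circular lattices. Specifically, the constraints f(000)=0, f(111)=1, f(100)=f(010)=f(001)=1, f(110)=f(101)=f(011)=0 (forced by parity preservation and convergence from configurations with a single 1 or single 0) uniquely determine rule 150, and rule 150 fails to converge from the configuration on 7 cells with a single 1. -/
/-- Global rule of a one-dimensional binary circular CA of radius `r` on `n` cells. -/
def glob (r n : ℕ) (f : (Fin (2*r+1) → Bool) → Bool) (X : ZMod n → Bool) :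
    ZMod n → Bool :=
  fun i => f (fun j => X (i + ((j : ℕ) : ZMod n) - (r : ZMod n)))

/-- Number of 1s (cells in state `true`) of a circular configuration. -/
def ones (n : ℕ) (X : ZMod n → Bool) : ℕ :=
  ((Finset.range n).filter (fun i : ℕ => X (i : ZMod n) = true)).card

def allZeros (n : ℕ) : ZMod n → Bool := fun _ => false
def allOnes (n : ℕ) : ZMod n → Bool := fun _ => true

/-- The CA converges from `X` to `P`: `P` is a fixed point reached in finitely many steps. -/
def convergesTo (r n : ℕ) (f : (Fin (2*r+1) → Bool) → Bool)
    (X P : ZMod n → Bool) : Prop :=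
  glob r n f P = P ∧ ∃ k, (glob r n f)^[k] X = P

/-- A rule is perfect if it solves the parity problem on every odd-sized circular lattice. -/
def PerfectRule (r : ℕ) (f : (Fin (2*r+1) → Bool) → Bool) : Prop :=
  ∀ n : ℕ, Odd n → ∀ X : ZMod n → Bool,
    (Odd (ones n X) → convergesTo r n f X (allOnes n)) ∧
    (Even (ones n X) → convergesTo r n f X (allZeros n))

/-- Number of active transitions (cells changing state) in one step. -/
def activeCount (r n : ℕ) (f : (Fin (2*r+1) → Bool) → Bool) (X : ZMod n → Bool) : ℕ :=
  ((Finset.range n).filter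
    (fun i : ℕ => glob r n f X (i : ZMod n) ≠ X (i : ZMod n))).card

def tab (b0 b1 b2 b3 b4 b5 b6 b7 : Bool) : (Fin (2*1+1) → Bool) → Bool :=
  fun g => if g 0 then (if g 1 then (if g 2 then b7 else b6) else (if g 2 then b5 else b4))
           else (if g 1 then (if g 2 then b3 else b2) else (if g 2 then b1 else b0))

def ep (p : ZMod 5) : ZMod 5 → Bool := fun i => decide (i = p)

lemma hftab (f : (Fin (2*1+1) → Bool) → Bool) :
    f = tab (f ![false,false,false]) (f ![false,false,true]) (f ![false,true,false])
            (f ![false,true,true]) (f ![true,false,false]) (f ![true,false,true])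
            (f ![true,true,false]) (f ![true,true,true]) := by
  funext g
  have hrep : g = ![g 0, g 1, g 2] := by
    funext j; fin_cases j <;> rfl
  rw [hrep]
  cases hg0 : g 0 <;> cases hg1 : g 1 <;> cases hg2 : g 2 <;> rfl

lemma convStep (g : (Fin (2*1+1) → Bool) → Bool) {X P : ZMod 5 → Bool}
    (h : convergesTo 1 5 g X P) : convergesTo 1 5 g (glob 1 5 g X) P := by
  obtain ⟨hP, k, hk⟩ := h
  refine ⟨hP, k, ?_⟩
  rw [← Function.iterate_succ_apply, Function.iterate_succ_apply', hk, hP]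

lemma uniq (g : (Fin (2*1+1) → Bool) → Bool) {X : ZMod 5 → Bool}
    (h1 : convergesTo 1 5 g X (allOnes 5)) (h0 : convergesTo 1 5 g X (allZeros 5)) : False := by
  obtain ⟨hP1, k1, hk1⟩ := h1
  obtain ⟨hP0, k0, hk0⟩ := h0
  rcases le_total k1 k0 with h | h
  · have h2 : (glob 1 5 g)^[k0] X = allOnes 5 := by
      rw [show k0 = (k0 - k1) + k1 by omega, Function.iterate_add_apply, hk1,
        Function.iterate_fixed hP1]
    rw [hk0] at h2
    simpa [allZeros, allOnes] using congrFun h2 0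
  · have h2 : (glob 1 5 g)^[k1] X = allZeros 5 := by
      rw [show k1 = (k1 - k0) + k0 by omega, Function.iterate_add_apply, hk0,
        Function.iterate_fixed hP0]
    rw [hk1] at h2
    simpa [allZeros, allOnes] using congrFun h2 0

lemma parityPres (g : (Fin (2*1+1) → Bool) → Bool) (hf : PerfectRule 1 g)
    (X : ZMod 5 → Bool) : Odd (ones 5 X) ↔ Odd (ones 5 (glob 1 5 g X)) := by
  have odd5 : Odd 5 := by decide
  constructor
  · intro ho
    by_contra hno
    have h1 : convergesTo 1 5 g (glob 1 5 g X) (allOnes 5) :=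
      convStep g ((hf 5 odd5 X).1 ho)
    have h0 : convergesTo 1 5 g (glob 1 5 g X) (allZeros 5) :=
      (hf 5 odd5 (glob 1 5 g X)).2 (Nat.not_odd_iff_even.mp hno)
    exact uniq g h1 h0
  · intro ho
    by_contra hno
    have h0 : convergesTo 1 5 g (glob 1 5 g X) (allZeros 5) :=
      convStep g ((hf 5 odd5 X).2 (Nat.not_odd_iff_even.mp hno))
    have h1 : convergesTo 1 5 g (glob 1 5 g X) (allOnes 5) :=
      (hf 5 odd5 (glob 1 5 g X)).1 ho
    exact uniq g h1 h0

lemma bad (g : (Fin (2*1+1) → Bool) → Bool) (hf : PerfectRule 1 g)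
    (h : (∃ X : ZMod 5 → Bool, ¬(Odd (ones 5 X) ↔ Odd (ones 5 (glob 1 5 g X))))
       ∨ (∃ d : ZMod 5, ∀ p, glob 1 5 g (ep p) = ep (p + d))
       ∨ (∃ X : ZMod 5 → Bool, glob 1 5 g X = X ∧ Even (ones 5 X) ∧ X ≠ allZeros 5)) :
    False := by
  have odd5 : Odd 5 := by decide
  rcases h with ⟨X, hX⟩ | ⟨d, hd⟩ | ⟨X, hfix, hev, hne⟩
  · exact hX (parityPres g hf X)
  · obtain ⟨_, k, hk⟩ := (hf 5 odd5 (ep 0)).1 (by decide)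
    have horb : ∀ m : ℕ, ∃ p : ZMod 5, (glob 1 5 g)^[m] (ep 0) = ep p := by
      intro m
      induction m with
      | zero => exact ⟨0, rfl⟩
      | succ m ih =>
        obtain ⟨p, hp⟩ := ih
        exact ⟨p + d, by rw [Function.iterate_succ_apply', hp, hd]⟩
    obtain ⟨p, hp⟩ := horb k
    rw [hk] at hp
    have := congrFun hp (p + 1)
    simp only [allOnes, ep, true_eq_decide_iff] at this
    have h10 : (1 : ZMod 5) = 0 := by
      rw [← add_sub_cancel_left p 1, this, sub_self]
    exact absurd h10 (by decide)
  · obtain ⟨_, k, hk⟩ := (hf 5 odd5 X).2 hev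
    rw [Function.iterate_fixed hfix] at hk
    exact hne hk

lemma noinj (g : (Fin (2*1+1) → Bool) → Bool) (hf : PerfectRule 1 g)
    (hinj : Function.Injective (glob 1 5 g)) : False := by
  obtain ⟨hfix1, k, hk⟩ := (hf 5 (by decide) (ep 0)).1 (by decide)
  have h2 : (glob 1 5 g)^[k] (allOnes 5) = allOnes 5 := Function.iterate_fixed hfix1 k
  have : ep 0 = allOnes 5 := (hinj.iterate k) (hk.trans h2.symm)
  exact absurd this (by decide)

lemma main (b0 b1 b2 b3 b4 b5 b6 b7 : Bool) :
    ¬ PerfectRule 1 (tab b0 b1 b2 b3 b4 b5 b6 b7) := by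
  intro hf
  cases b0 <;> cases b1 <;> cases b2 <;> cases b3 <;> cases b4 <;> cases b5 <;> cases b6 <;>
    cases b7 <;>
    first
      | exact bad _ hf (by decide)
      | exact noinj _ hf (by decide)

/-- there is no perfect elementary cellular automaton (radius 1)
solving the parity problem on all odd-sized circular lattices. -/
theorem stmt2 : ¬ ∃ f : (Fin (2*1+1) → Bool) → Bool, PerfectRule 1 f := by
  rintro ⟨f, hf⟩
  rw [hftab f] at hf
  exact main _ _ _ _ _ _ _ _ hf
end

section
/- Let f be a radius-2 rule that solves the parity problem on odd circular lattices. Then among the five neighbourhood values f(10000), f(01000), f(00100), f(00010), f(00001), the number equal to 1 is odd and at least 3 (i.e., exactly 3 or 5 of them equal 1). -/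
section

variable {r n : ℕ} {f : (Fin (2*r+1) → Bool) → Bool}

def single (p : ZMod n) : ZMod n → Bool := fun i => decide (i = p)

theorem glob_comp_add (X : ZMod n → Bool) (t : ZMod n) :
    glob r n f (fun i => X (i + t)) = fun i => glob r n f X (i + t) := by
  funext i
  simp only [glob, add_right_comm _ t, sub_add_eq_add_sub]

theorem convergesTo.eq {X P Q : ZMod n → Bool} (hP : convergesTo r n f X P)
    (hQ : convergesTo r n f X Q) : P = Q := by
  obtain ⟨hPfix, k, hk⟩ := hP
  obtain ⟨hQfix, m, hm⟩ := hQ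
  calc P = (glob r n f)^[m + k] X := by
        rw [Function.iterate_add_apply, hk, Function.iterate_fixed hPfix]
    _ = Q := by rw [add_comm, Function.iterate_add_apply, hm, Function.iterate_fixed hQfix]

theorem convergesTo.of_glob {X P : ZMod n → Bool} (h : convergesTo r n f (glob r n f X) P) :
    convergesTo r n f X P := by
  obtain ⟨hfix, k, hk⟩ := h
  exact ⟨hfix, k + 1, hk⟩

theorem PerfectRule.odd_ones_glob (hf : PerfectRule r f) (hn : Odd n) {X : ZMod n → Bool}
    (hX : Odd (ones n X)) : Odd (ones n (glob r n f X)) := by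
  by_contra heven
  have h := ((hf n hn X).1 hX).eq ((hf n hn _).2 (Nat.not_odd_iff_even.1 heven)).of_glob
  exact Bool.noConfusion (congrFun h 0)

theorem ones_le (X : ZMod n → Bool) : ones n X ≤ n :=
  (Finset.card_filter_le _ _).trans (Finset.card_range n).le

theorem ones_eq_card_filter_univ [NeZero n] (X : ZMod n → Bool) :
    ones n X = (Finset.univ.filter (fun i => X i = true)).card := by
  refine Finset.card_bij' (fun i _ => (i : ZMod n)) (fun i _ => i.val) ?_ ?_ ?_ ?_
  · intro i hi; simpa using (Finset.mem_filter.1 hi).2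
  · intro i hi
    simp only [Finset.mem_filter, Finset.mem_range, ZMod.natCast_zmod_val]
    exact ⟨ZMod.val_lt i, (Finset.mem_filter.1 hi).2⟩
  · intro i hi; exact ZMod.val_cast_of_lt (Finset.mem_range.1 (Finset.mem_filter.1 hi).1)
  · intro i _; exact ZMod.natCast_zmod_val i

theorem ones_single [NeZero n] (p : ZMod n) : ones n (single p) = 1 := by
  simp [ones_eq_card_filter_univ, single, Finset.filter_eq']

theorem exists_eq_single_of_ones_eq_one [NeZero n] {Y : ZMod n → Bool} (h : ones n Y = 1) :
    ∃ q, Y = single q := by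
  obtain ⟨q, hq⟩ := Finset.card_eq_one.1 ((ones_eq_card_filter_univ Y).symm.trans h)
  refine ⟨q, funext fun i => ?_⟩
  have := Finset.ext_iff.1 hq i
  simp only [Finset.mem_filter, Finset.mem_univ, true_and, Finset.mem_singleton] at this
  simp only [single, ← this, Bool.decide_eq_true]

theorem glob_single_of_glob_single_zero {q : ZMod n} (hq : glob r n f (single 0) = single q)
    (p : ZMod n) : glob r n f (single p) = single (p + q) := by
  have hshift : single p = fun i => single 0 (i + -p) := by
    funext i; simp [single, add_neg_eq_zero]
  rw [hshift, glob_comp_add, hq]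
  funext i
  simp [single, ← sub_eq_add_neg, sub_eq_iff_eq_add, add_comm]

theorem iterate_glob_single {q : ZMod n} (hq : glob r n f (single 0) = single q) (m : ℕ)
    (p : ZMod n) : (glob r n f)^[m] (single p) = single (p + m • q) := by
  induction m with
  | zero => simp
  | succ m ih =>
    rw [Function.iterate_succ_apply', ih, glob_single_of_glob_single_zero hq, succ_nsmul, add_assoc]

theorem single_ne_allOnes (hn : n ≠ 1) (p : ZMod n) : single p ≠ allOnes n := by
  intro h
  have := congrFun h (p + 1)
  simp only [single, allOnes, add_eq_left, decide_eq_true_eq] at this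
  exact hn (ZMod.one_eq_zero_iff.1 this)

theorem PerfectRule.glob_single_zero_ne_single (hf : PerfectRule r f) (hn : Odd n) (hn1 : n ≠ 1)
    (q : ZMod n) : glob r n f (single 0) ≠ single q := by
  intro hq
  have : NeZero n := ⟨hn.pos.ne'⟩
  obtain ⟨-, k, hk⟩ := (hf n hn (single 0)).1 (by rw [ones_single]; exact odd_one)
  exact single_ne_allOnes hn1 _ (iterate_glob_single hq k 0 ▸ hk)

end

theorem ones_five (Y : ZMod 5 → Bool) : ones 5 Y = [Y 2, Y 1, Y 0, Y 4, Y 3].count true := by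
  simp only [ones, Finset.card_filter, Finset.sum_range_succ, Finset.sum_range_zero,
    List.count_cons, List.count_nil, beq_iff_eq, Nat.cast_ofNat, Nat.cast_zero, Nat.cast_one]
  omega

/-- Cell `i` sees the single 1 at position `2 - i` of its window, whence the order in `ones_five`. -/
theorem ones_glob_single_zero (f : (Fin (2*2+1) → Bool) → Bool) :
    ones 5 (glob 2 5 f (single 0)) =
    [f ![true,false,false,false,false], f ![false,true,false,false,false],
      f ![false,false,true,false,false], f ![false,false,false,true,false],
      f ![false,false,false,false,true]].count true := by
  rw [ones_five]
  congr 1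
  simp only [List.cons.injEq, and_true]
  refine ⟨?_, ?_, ?_, ?_, ?_⟩ <;>
    (simp only [glob, single]; congr 1; funext j; fin_cases j <;> decide)

/-- for a perfect radius-2 rule, exactly 3 or 5 of the neighbourhoods
`10000, 01000, 00100, 00010, 00001` map to 1. -/
theorem stmt5 (f : (Fin (2*2+1) → Bool) → Bool) (hf : PerfectRule 2 f) :
    ([f ![true,false,false,false,false], f ![false,true,false,false,false],
      f ![false,false,true,false,false], f ![false,false,false,true,false],
      f ![false,false,false,false,true]].count true = 3) ∨
    ([f ![true,false,false,false,false], f ![false,true,false,false,false],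
      f ![false,false,true,false,false], f ![false,false,false,true,false],
      f ![false,false,false,false,true]].count true = 5) := by
  rw [← ones_glob_single_zero]
  have hodd : Odd (ones 5 (glob 2 5 f (single 0))) :=
    hf.odd_ones_glob (by decide) (by rw [ones_single]; exact odd_one)
  have hne : ones 5 (glob 2 5 f (single 0)) ≠ 1 := fun h1 =>
    let ⟨q, hq⟩ := exists_eq_single_of_ones_eq_one h1
    hf.glob_single_zero_ne_single (by decide) (by decide) q hq
  have hle := ones_le (glob 2 5 f (single 0))
  obtain ⟨m, hm⟩ := hodd
  omega
end

section
/- Let f be a radius-2 rule solving the parity problem on odd lattices. Then among f(01111), f(10111), f(11011), f(11101), f(11110), the number equal to 0 is exactly 3 or 5. -/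
def XS (a : ZMod 5) : ZMod 5 → Bool := fun i => decide (i ≠ a)

def Yof (c1 c2 c3 c4 c5 : Bool) : ZMod 5 → Bool :=
  fun i => if i = 0 then c3 else if i = 1 then c2 else if i = 2 then c1
    else if i = 3 then c5 else c4

lemma glob_shift (f : (Fin (2*2+1) → Bool) → Bool) (X : ZMod 5 → Bool) (a : ZMod 5) :
    glob 2 5 f (fun i => X (i + a)) = fun i => glob 2 5 f X (i + a) := by
  funext i
  unfold glob
  congr 1
  funext j
  congr 1
  ring_nf

lemma XS_eq : ∀ a : ZMod 5, XS a = fun i => XS 0 (i + (-a)) := by decide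

lemma XS_shift : ∀ (b a : ZMod 5), (fun i => XS b (i + -a)) = XS (b + a) := by decide

lemma step_XS (f : (Fin (2*2+1) → Bool) → Bool) (b : ZMod 5)
    (hb : glob 2 5 f (XS 0) = XS b) (a : ZMod 5) :
    glob 2 5 f (XS a) = XS (b + a) := by
  rw [XS_eq a, glob_shift, hb, XS_shift]

lemma iter_XS (f : (Fin (2*2+1) → Bool) → Bool) (b : ZMod 5)
    (hb : glob 2 5 f (XS 0) = XS b) :
    ∀ m, ∃ a, (glob 2 5 f)^[m] (XS 0) = XS a := by
  intro m
  induction m with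
  | zero => exact ⟨0, rfl⟩
  | succ m ih =>
    obtain ⟨a, ha⟩ := ih
    exact ⟨b + a, by rw [Function.iterate_succ_apply', ha, step_XS f b hb a]⟩

lemma single_contra (f : (Fin (2*2+1) → Bool) → Bool) (b : ZMod 5)
    (hb : glob 2 5 f (XS 0) = XS b)
    (m : ℕ) (hm : (glob 2 5 f)^[m] (XS 0) = allZeros 5) : False := by
  obtain ⟨a, ha⟩ := iter_XS f b hb m
  have h := congrFun (ha.symm.trans hm) (a + 1)
  simp [XS, allZeros] at h
  exact (by decide : (1:ZMod 5) ≠ 0) h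

lemma glob_XS0 (f : (Fin (2*2+1) → Bool) → Bool) :
    glob 2 5 f (XS 0) = Yof (f ![false,true,true,true,true]) (f ![true,false,true,true,true])
      (f ![true,true,false,true,true]) (f ![true,true,true,false,true])
      (f ![true,true,true,true,false]) := by
  funext i
  have hcases : ∀ i : ZMod 5, i = 0 ∨ i = 1 ∨ i = 2 ∨ i = 3 ∨ i = 4 := by decide
  rcases hcases i with h | h | h | h | h <;> subst h <;>
    simp only [Yof, glob] <;> norm_num <;> exact congrArg f (by decide)

/-- for a perfect radius-2 rule, exactly 3 or 5 of the neighbourhoods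
`01111, 10111, 11011, 11101, 11110` map to 0. -/
theorem stmt6 (f : (Fin (2*2+1) → Bool) → Bool) (hf : PerfectRule 2 f) :
    ([f ![false,true,true,true,true], f ![true,false,true,true,true],
      f ![true,true,false,true,true], f ![true,true,true,false,true],
      f ![true,true,true,true,false]].count false = 3) ∨
    ([f ![false,true,true,true,true], f ![true,false,true,true,true],
      f ![true,true,false,true,true], f ![true,true,true,false,true],
      f ![true,true,true,true,false]].count false = 5) := by
  have h0 : convergesTo 2 5 f (XS 0) (allZeros 5) :=
    (hf 5 (by decide) (XS 0)).2 (by decide)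
  obtain ⟨hfix0, m, hm⟩ := h0
  have hYnotodd : ¬ Odd (ones 5 (glob 2 5 f (XS 0))) := by
    intro hodd
    have h1 : convergesTo 2 5 f (glob 2 5 f (XS 0)) (allOnes 5) :=
      (hf 5 (by decide) (glob 2 5 f (XS 0))).1 hodd
    obtain ⟨hfix1, p, hp⟩ := h1
    rcases m with _ | m'
    · have h := congrFun hm 1
      simp [XS, allZeros] at h
      exact (by decide : (1:ZMod 5) ≠ 0) h
    · rw [Function.iterate_succ_apply] at hm
      have h1 : (glob 2 5 f)^[p + m'] (glob 2 5 f (XS 0)) = allZeros 5 := by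
        rw [Function.iterate_add_apply, hm, Function.iterate_fixed hfix0]
      have h2 : (glob 2 5 f)^[m' + p] (glob 2 5 f (XS 0)) = allOnes 5 := by
        rw [Function.iterate_add_apply, hp, Function.iterate_fixed hfix1]
      rw [Nat.add_comm] at h1
      have h := congrFun (h1.symm.trans h2) 0
      simp [allZeros, allOnes] at h
  have hY := glob_XS0 f
  cases hb1 : f ![false,true,true,true,true] <;>
  cases hb2 : f ![true,false,true,true,true] <;>
  cases hb3 : f ![true,true,false,true,true] <;>
  cases hb4 : f ![true,true,true,false,true] <;>
  cases hb5 : f ![true,true,true,true,false] <;>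
  rw [hb1, hb2, hb3, hb4, hb5] at hY <;>

  first
  | (left; decide)
  | (right; decide)
  | (rw [hY] at hYnotodd; exact absurd (by decide) hYnotodd)
  | exact (single_contra f 0 (hY.trans (by decide)) m hm).elim
  | exact (single_contra f 1 (hY.trans (by decide)) m hm).elim
  | exact (single_contra f 2 (hY.trans (by decide)) m hm).elim
  | exact (single_contra f 3 (hY.trans (by decide)) m hm).elim
  | exact (single_contra f 4 (hY.trans (by decide)) m hm).elim
end

section
/- For any radius-2 rule f that preserves the parity of all odd-length circular configurations, exactly one of the following holds: (f(10101)=1 and f(01010)=0) or (f(10101)=0 and f(01010)=1). Equivalently, f(10101) ≠ f(01010). -/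
def X7 : ZMod 7 → Bool := fun i => decide (i.val % 2 = 0)
def X9 : ZMod 9 → Bool := fun i => decide (i.val % 2 = 0)

/-- a radius-2 rule preserving parity of all odd-length circular
configurations must have `f(10101) ≠ f(01010)`. -/
theorem stmt8 (f : (Fin (2*2+1) → Bool) → Bool)
    (hf : ∀ n : ℕ, Odd n → ∀ X : ZMod n → Bool,
      ones n (glob 2 n f X) ≡ ones n X [MOD 2]) :
    f ![true,false,true,false,true] ≠ f ![false,true,false,true,false] := by
  intro h
  have e7_0 : glob 2 7 f X7 ((0:ℕ) : ZMod 7) = f ![false,true,true,false,true] := congrArg f (by decide)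
  have e7_1 : glob 2 7 f X7 ((1:ℕ) : ZMod 7) = f ![true,true,false,true,false] := congrArg f (by decide)
  have e7_2 : glob 2 7 f X7 ((2:ℕ) : ZMod 7) = f ![true,false,true,false,true] := congrArg f (by decide)
  have e7_3 : glob 2 7 f X7 ((3:ℕ) : ZMod 7) = f ![false,true,false,true,false] := congrArg f (by decide)
  have e7_4 : glob 2 7 f X7 ((4:ℕ) : ZMod 7) = f ![true,false,true,false,true] := congrArg f (by decide)
  have e7_5 : glob 2 7 f X7 ((5:ℕ) : ZMod 7) = f ![false,true,false,true,true] := congrArg f (by decide)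
  have e7_6 : glob 2 7 f X7 ((6:ℕ) : ZMod 7) = f ![true,false,true,true,false] := congrArg f (by decide)
  have e9_0 : glob 2 9 f X9 ((0:ℕ) : ZMod 9) = f ![false,true,true,false,true] := congrArg f (by decide)
  have e9_1 : glob 2 9 f X9 ((1:ℕ) : ZMod 9) = f ![true,true,false,true,false] := congrArg f (by decide)
  have e9_2 : glob 2 9 f X9 ((2:ℕ) : ZMod 9) = f ![true,false,true,false,true] := congrArg f (by decide)
  have e9_3 : glob 2 9 f X9 ((3:ℕ) : ZMod 9) = f ![false,true,false,true,false] := congrArg f (by decide)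
  have e9_4 : glob 2 9 f X9 ((4:ℕ) : ZMod 9) = f ![true,false,true,false,true] := congrArg f (by decide)
  have e9_5 : glob 2 9 f X9 ((5:ℕ) : ZMod 9) = f ![false,true,false,true,false] := congrArg f (by decide)
  have e9_6 : glob 2 9 f X9 ((6:ℕ) : ZMod 9) = f ![true,false,true,false,true] := congrArg f (by decide)
  have e9_7 : glob 2 9 f X9 ((7:ℕ) : ZMod 9) = f ![false,true,false,true,true] := congrArg f (by decide)
  have e9_8 : glob 2 9 f X9 ((8:ℕ) : ZMod 9) = f ![true,false,true,true,false] := congrArg f (by decide)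
  have s7 : ones 7 (glob 2 7 f X7) = 0 + (if f ![false,true,true,false,true] = true then 1 else 0) + (if f ![true,true,false,true,false] = true then 1 else 0) + (if f ![true,false,true,false,true] = true then 1 else 0) + (if f ![false,true,false,true,false] = true then 1 else 0) + (if f ![true,false,true,false,true] = true then 1 else 0) + (if f ![false,true,false,true,true] = true then 1 else 0) + (if f ![true,false,true,true,false] = true then 1 else 0) := by
    show (Finset.filter _ _).card = _
    rw [Finset.card_filter]
    simp only [Finset.sum_range_succ, Finset.sum_range_zero]
    rw [e7_0, e7_1, e7_2, e7_3, e7_4, e7_5, e7_6]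
  have s9 : ones 9 (glob 2 9 f X9) = 0 + (if f ![false,true,true,false,true] = true then 1 else 0) + (if f ![true,true,false,true,false] = true then 1 else 0) + (if f ![true,false,true,false,true] = true then 1 else 0) + (if f ![false,true,false,true,false] = true then 1 else 0) + (if f ![true,false,true,false,true] = true then 1 else 0) + (if f ![false,true,false,true,false] = true then 1 else 0) + (if f ![true,false,true,false,true] = true then 1 else 0) + (if f ![false,true,false,true,true] = true then 1 else 0) + (if f ![true,false,true,true,false] = true then 1 else 0) := by
    show (Finset.filter _ _).card = _
    rw [Finset.card_filter]
    simp only [Finset.sum_range_succ, Finset.sum_range_zero]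
    rw [e9_0, e9_1, e9_2, e9_3, e9_4, e9_5, e9_6, e9_7, e9_8]
  have h7 := hf 7 ⟨3, rfl⟩ X7
  have h9 := hf 9 ⟨4, rfl⟩ X9
  have hx7 : ones 7 X7 = 4 := by decide
  have hx9 : ones 9 X9 = 5 := by decide
  unfold Nat.ModEq at h7 h9
  rw [s7, hx7, h] at h7
  rw [s9, hx9, h] at h9
  revert h7 h9
  cases f ![false,true,false,true,false] <;>
    cases f ![false,true,true,false,true] <;>
    cases f ![true,true,false,true,false] <;>
    cases f ![false,true,false,true,true] <;>
    cases f ![true,false,true,true,false] <;> decide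
end

section
/- Let f be a perfect radius-2 parity rule. Then no pre-image of the all-0s configuration can contain four or more consecutive 0s. Formally: there is no odd-length configuration X containing the factor 0000 with F(X) equal to the all-0s configuration. -/
-- pattern rewriting lemma
lemma globN (n : ℕ) (f : (Fin (2*2+1) → Bool) → Bool) (X : ZMod n → Bool) (c : ZMod n) :
    glob 2 n f X c = f ![X (c-2), X (c-1), X c, X (c+1), X (c+2)] := by
  unfold glob
  congr 1
  funext j
  fin_cases j <;> simp <;> ring_nf

lemma conv_unique (r n : ℕ) (f : (Fin (2*r+1) → Bool) → Bool) (X P Q : ZMod n → Bool)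
    (hP : convergesTo r n f X P) (hQ : convergesTo r n f X Q) : P = Q := by
  obtain ⟨hPf, k, hk⟩ := hP
  obtain ⟨hQf, m, hm⟩ := hQ
  rcases le_total k m with h | h
  · obtain ⟨d, rfl⟩ := Nat.exists_eq_add_of_le h
    rw [Nat.add_comm, Function.iterate_add_apply, hk, Function.iterate_fixed hPf] at hm
    exact hm.symm ▸ rfl
  · obtain ⟨d, rfl⟩ := Nat.exists_eq_add_of_le h
    rw [Nat.add_comm, Function.iterate_add_apply, hm, Function.iterate_fixed hQf] at hk
    exact hk.symm

lemma ones_allZeros (n : ℕ) : ones n (allZeros n) = 0 := by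
  simp [ones, allZeros]

lemma allOnes_ne_allZeros (n : ℕ) : allOnes n ≠ allZeros n := by
  intro h
  have := congrFun h 0
  simp [allOnes, allZeros] at this

lemma fix_zero (f : (Fin (2*2+1) → Bool) → Bool) (hf : PerfectRule 2 f)
    (n : ℕ) (hn : Odd n) : glob 2 n f (allZeros n) = allZeros n :=
  ((hf n hn (allZeros n)).2 (by simp [ones_allZeros])).1

lemma parity_pres (f : (Fin (2*2+1) → Bool) → Bool) (hf : PerfectRule 2 f)
    (n : ℕ) (hn : Odd n) (X : ZMod n → Bool) :
    Odd (ones n (glob 2 n f X)) ↔ Odd (ones n X) := by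
  constructor
  · intro h1
    by_contra h2
    rw [Nat.not_odd_iff_even] at h2
    have c1 := (hf n hn (glob 2 n f X)).1 h1
    have c2 := (hf n hn X).2 h2
    have c2' : convergesTo 2 n f (glob 2 n f X) (allZeros n) := by
      obtain ⟨hfix, k, hk⟩ := c2
      exact ⟨hfix, k, by
        have : (glob 2 n f)^[k] (glob 2 n f X) = (glob 2 n f)^[k+1] X := by
          rw [Function.iterate_succ_apply]
        rw [this]
        calc (glob 2 n f)^[k+1] X = glob 2 n f ((glob 2 n f)^[k] X) := by
              rw [Function.iterate_succ_apply']
          _ = allZeros n := by rw [hk, hfix]⟩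
    exact allOnes_ne_allZeros n (conv_unique 2 n f _ _ _ c1 c2')
  · intro h1
    by_contra h2
    rw [Nat.not_odd_iff_even] at h2
    have c1 := (hf n hn X).1 h1
    have c2 := (hf n hn (glob 2 n f X)).2 h2
    have c2' : convergesTo 2 n f X (allZeros n) := by
      obtain ⟨hfix, k, hk⟩ := c2
      exact ⟨hfix, k+1, by rw [Function.iterate_succ_apply]; exact hk⟩
    exact allOnes_ne_allZeros n (conv_unique 2 n f _ _ _ c1 c2')

def sh (t : ZMod 9) (Y : ZMod 9 → Bool) : ZMod 9 → Bool := fun x => Y (x + t)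

def ee : ZMod 9 → Bool := fun x => decide (x = 0)

def ww (a b c : Bool) : ZMod 9 → Bool :=
  fun x => if x = 8 then a else if x = 0 then b else if x = 1 then c else false

example : ee = ww false true false := by decide
example (t : ZMod 9) : sh t (sh 2 ee) = sh (2 + t) ee := by
  funext x; simp [sh]; ring_nf

example : ww true false false = sh 1 ee := by decide
example : ww false false true = sh 8 ee := by decide

example : ones 9 ee = 1 := by decide

lemma glob_sh (f : (Fin (2*2+1) → Bool) → Bool) (t : ZMod 9) (Y : ZMod 9 → Bool) :
    glob 2 9 f (sh t Y) = sh t (glob 2 9 f Y) := by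
  funext x
  unfold glob sh
  congr 1
  funext j
  ring_nf

lemma glob_ee (f : (Fin (2*2+1) → Bool) → Bool)
    (h00000 : f ![false,false,false,false,false] = false)
    (h10000 : f ![true,false,false,false,false] = false)
    (h00001 : f ![false,false,false,false,true] = false) :
    glob 2 9 f ee
      = ww (f ![false,false,false,true,false]) (f ![false,false,true,false,false])
           (f ![false,true,false,false,false]) := by
  funext x
  rw [globN]
  fin_cases x <;>
    first
      | exact (congrArg f (by decide)).trans h00000
      | exact (congrArg f (by decide)).trans h10000
      | exact (congrArg f (by decide)).trans h00001
      | exact congrArg f (by decide)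

lemma fromX (f : (Fin (2*2+1) → Bool) → Bool) (n : ℕ) (hn : Odd n)
    (X : ZMod n → Bool) (hne : X ≠ allZeros n) (i : ZMod n)
    (h0 : X i = false) (h1 : X (i+1) = false) (h2 : X (i+2) = false)
    (h3 : X (i+3) = false) (hF : glob 2 n f X = allZeros n) :
    f ![true,false,false,false,false] = false ∧
    f ![false,false,false,false,true] = false ∧
    (∃ q, f ![q,true,false,false,false] = false) ∧
    (∃ q, f ![false,false,false,true,q] = false) := by
  have hnz : NeZero n := ⟨by rcases hn with ⟨m, rfl⟩; omega⟩
  have hex : ∃ t, X t = true := by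
    by_contra h
    push_neg at h
    exact hne (funext fun x => by
      cases hx : X x
      · rfl
      · exact absurd hx (h x))
  obtain ⟨t, ht⟩ := hex
  have hcell : ∀ c : ZMod n, f ![X (c-2), X (c-1), X c, X (c+1), X (c+2)] = false := by
    intro c
    have hc := congrFun hF c
    rw [globN] at hc
    exact hc
  -- right boundary
  have hPex : ∃ k : ℕ, X (i + (k : ZMod n)) = true := by
    refine ⟨(t - i).val, ?_⟩
    rw [ZMod.natCast_val, ZMod.cast_id]
    rw [show i + (t - i) = t by ring]
    exact ht
  classical
  set k₀ := Nat.find hPex with hk₀def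
  have hk₀ : X (i + (k₀ : ZMod n)) = true := Nat.find_spec hPex
  have hmin : ∀ j, j < k₀ → X (i + (j : ZMod n)) = false := by
    intro j hj
    have := Nat.find_min hPex hj
    cases hx : X (i + (j : ZMod n))
    · rfl
    · exact absurd hx this
  have hk₀4 : 4 ≤ k₀ := by
    by_contra h
    push_neg at h
    interval_cases k₀ <;> push_cast at hk₀ <;>
      simp_all
  clear_value k₀
  obtain ⟨k₁, rfl⟩ : ∃ k₁, k₀ = k₁ + 4 := ⟨k₀ - 4, by omega⟩
  have hb : ∀ j : ℕ, j < 4 → X (i + ((k₁ + j : ℕ) : ZMod n)) = false :=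
    fun j hj => hmin (k₁ + j) (by omega)
  -- the pattern 00001 at cell i + k₁ + 2
  have e00001 : f ![false,false,false,false,true] = false := by
    have hc := hcell (i + ((k₁ + 2 : ℕ) : ZMod n))
    rw [show i + ((k₁ + 2 : ℕ) : ZMod n) - 2 = i + ((k₁ + 0 : ℕ) : ZMod n) by push_cast; ring,
        show i + ((k₁ + 2 : ℕ) : ZMod n) - 1 = i + ((k₁ + 1 : ℕ) : ZMod n) by push_cast; ring,
        show i + ((k₁ + 2 : ℕ) : ZMod n) + 1 = i + ((k₁ + 3 : ℕ) : ZMod n) by push_cast; ring,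
        show i + ((k₁ + 2 : ℕ) : ZMod n) + 2 = i + ((k₁ + 4 : ℕ) : ZMod n) by push_cast; ring,
        hb 0 (by omega), hb 1 (by omega), hb 2 (by omega), hb 3 (by omega), hk₀] at hc
    exact hc
  have e0001q : ∃ q, f ![false,false,false,true,q] = false := by
    refine ⟨X (i + ((k₁ + 5 : ℕ) : ZMod n)), ?_⟩
    have hc := hcell (i + ((k₁ + 3 : ℕ) : ZMod n))
    rw [show i + ((k₁ + 3 : ℕ) : ZMod n) - 2 = i + ((k₁ + 1 : ℕ) : ZMod n) by push_cast; ring,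
        show i + ((k₁ + 3 : ℕ) : ZMod n) - 1 = i + ((k₁ + 2 : ℕ) : ZMod n) by push_cast; ring,
        show i + ((k₁ + 3 : ℕ) : ZMod n) + 1 = i + ((k₁ + 4 : ℕ) : ZMod n) by push_cast; ring,
        show i + ((k₁ + 3 : ℕ) : ZMod n) + 2 = i + ((k₁ + 5 : ℕ) : ZMod n) by push_cast; ring,
        hb 1 (by omega), hb 2 (by omega), hb 3 (by omega), hk₀] at hc
    exact hc
  -- left boundary
  have hQex : ∃ k : ℕ, X (i - (k : ZMod n)) = true := by
    refine ⟨(i - t).val, ?_⟩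
    rw [ZMod.natCast_val, ZMod.cast_id]
    rw [show i - (i - t) = t by ring]
    exact ht
  set l₀ := Nat.find hQex with hl₀def
  have hl₀ : X (i - (l₀ : ZMod n)) = true := Nat.find_spec hQex
  have hmin' : ∀ j, j < l₀ → X (i - (j : ZMod n)) = false := by
    intro j hj
    have := Nat.find_min hQex hj
    cases hx : X (i - (j : ZMod n))
    · rfl
    · exact absurd hx this
  have hl₀1 : 1 ≤ l₀ := by
    by_contra h
    push_neg at h
    interval_cases l₀
    · push_cast at hl₀; rw [show i - 0 = i by ring] at hl₀; simp_all
  have hz : ∀ j : ℕ, 1 ≤ j → j ≤ 4 → X (i - (l₀ : ZMod n) + (j : ZMod n)) = false := by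
    intro j hj1 hj4
    rcases le_or_gt j l₀ with h | h
    · have : i - (l₀ : ZMod n) + (j : ZMod n) = i - ((l₀ - j : ℕ) : ZMod n) := by
        rw [Nat.cast_sub h]; ring
      rw [this]
      exact hmin' (l₀ - j) (by omega)
    · have : i - (l₀ : ZMod n) + (j : ZMod n) = i + ((j - l₀ : ℕ) : ZMod n) := by
        rw [Nat.cast_sub h.le]; ring
      rw [this]
      have hd : j - l₀ = 1 ∨ j - l₀ = 2 ∨ j - l₀ = 3 := by omega
      rcases hd with hd | hd | hd <;> rw [hd] <;> push_cast <;> assumption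
  have e10000 : f ![true,false,false,false,false] = false := by
    have hc := hcell (i - (l₀ : ZMod n) + ((2:ℕ) : ZMod n))
    rw [show i - (l₀ : ZMod n) + ((2:ℕ) : ZMod n) - 2 = i - (l₀ : ZMod n) by push_cast; ring,
        show i - (l₀ : ZMod n) + ((2:ℕ) : ZMod n) - 1 = i - (l₀ : ZMod n) + ((1:ℕ) : ZMod n) by push_cast; ring,
        show i - (l₀ : ZMod n) + ((2:ℕ) : ZMod n) + 1 = i - (l₀ : ZMod n) + ((3:ℕ) : ZMod n) by push_cast; ring,
        show i - (l₀ : ZMod n) + ((2:ℕ) : ZMod n) + 2 = i - (l₀ : ZMod n) + ((4:ℕ) : ZMod n) by push_cast; ring,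
        hl₀, hz 1 (by omega) (by omega), hz 2 (by omega) (by omega),
        hz 3 (by omega) (by omega), hz 4 (by omega) (by omega)] at hc
    exact hc
  have eq1000 : ∃ q, f ![q,true,false,false,false] = false := by
    refine ⟨X (i - (l₀ : ZMod n) - 1), ?_⟩
    have hc := hcell (i - (l₀ : ZMod n) + ((1:ℕ) : ZMod n))
    rw [show i - (l₀ : ZMod n) + ((1:ℕ) : ZMod n) - 2 = i - (l₀ : ZMod n) - 1 by push_cast; ring,
        show i - (l₀ : ZMod n) + ((1:ℕ) : ZMod n) - 1 = i - (l₀ : ZMod n) by push_cast; ring,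
        show i - (l₀ : ZMod n) + ((1:ℕ) : ZMod n) + 1 = i - (l₀ : ZMod n) + ((2:ℕ) : ZMod n) by push_cast; ring,
        show i - (l₀ : ZMod n) + ((1:ℕ) : ZMod n) + 2 = i - (l₀ : ZMod n) + ((3:ℕ) : ZMod n) by push_cast; ring,
        hl₀, hz 1 (by omega) (by omega), hz 2 (by omega) (by omega),
        hz 3 (by omega) (by omega)] at hc
    exact hc
  exact ⟨e10000, e00001, eq1000, e0001q⟩

lemma glob_c3 (f : (Fin (2*2+1) → Bool) → Bool)
    (h00000 : f ![false,false,false,false,false] = false)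
    (h10000 : f ![true,false,false,false,false] = false)
    (h00001 : f ![false,false,false,false,true] = false)
    (h11000 : f ![true,true,false,false,false] = false)
    (h00011 : f ![false,false,false,true,true] = false) :
    glob 2 9 f (ww true true true)
      = ww (f ![false,false,true,true,true]) (f ![false,true,true,true,false])
           (f ![true,true,true,false,false]) := by
  funext x
  rw [globN]
  fin_cases x <;>
    first
      | exact (congrArg f (by decide)).trans h00000
      | exact (congrArg f (by decide)).trans h10000
      | exact (congrArg f (by decide)).trans h00001
      | exact (congrArg f (by decide)).trans h11000
      | exact (congrArg f (by decide)).trans h00011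
      | exact congrArg f (by decide)

lemma sh_sh (t t' : ZMod 9) (Y : ZMod 9 → Bool) : sh t (sh t' Y) = sh (t' + t) Y := by
  funext x; simp only [sh]; ring_nf

lemma no_reach (f : (Fin (2*2+1) → Bool) → Bool) (hf : PerfectRule 2 f)
    (Y : ZMod 9 → Bool)
    (hge : ∃ t, glob 2 9 f ee = sh t ee ∨ glob 2 9 f ee = sh t Y)
    (hgY : ∃ t, glob 2 9 f Y = sh t ee ∨ glob 2 9 f Y = sh t Y)
    (hY : ∃ x, Y x = false) : False := by
  have h9 : Odd 9 := ⟨4, rfl⟩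
  have hconv := (hf 9 h9 ee).1 (by decide)
  obtain ⟨-, k, hk⟩ := hconv
  have claim : ∀ m, ∃ t, (glob 2 9 f)^[m] ee = sh t ee ∨ (glob 2 9 f)^[m] ee = sh t Y := by
    intro m
    induction m with
    | zero => exact ⟨0, Or.inl (by funext x; simp [sh])⟩
    | succ m ih =>
        obtain ⟨t, h | h⟩ := ih <;>
          rw [Function.iterate_succ_apply', h, glob_sh]
        · obtain ⟨t', h' | h'⟩ := hge <;> rw [h', sh_sh] <;> exact ⟨t' + t, by tauto⟩
        · obtain ⟨t', h' | h'⟩ := hgY <;> rw [h', sh_sh] <;> exact ⟨t' + t, by tauto⟩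
  obtain ⟨t, hT | hT⟩ := claim k <;> rw [hk] at hT
  · have := congrFun hT (1 - t)
    rw [show allOnes 9 (1 - t) = true from rfl] at this
    rw [show sh t ee (1 - t) = ee (1 - t + t) from rfl,
        show (1 : ZMod 9) - t + t = 1 by ring] at this
    exact absurd this (by decide)
  · obtain ⟨x, hx⟩ := hY
    have := congrFun hT (x - t)
    rw [show allOnes 9 (x - t) = true from rfl] at this
    rw [show sh t Y (x - t) = Y (x - t + t) from rfl,
        show x - t + t = x by ring, hx] at this
    exact absurd this (by decide)


/-- for a perfect radius-2 rule, no (non-trivial) odd-length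
configuration containing four consecutive 0s is a pre-image of the 0-configuration. -/
theorem stmt9 (f : (Fin (2*2+1) → Bool) → Bool) (hf : PerfectRule 2 f) :
    ¬ ∃ (n : ℕ), Odd n ∧ ∃ X : ZMod n → Bool, X ≠ allZeros n ∧
      (∃ i : ZMod n, X i = false ∧ X (i+1) = false ∧ X (i+2) = false ∧
        X (i+3) = false) ∧
      glob 2 n f X = allZeros n := by
  rintro ⟨n, hn, X, hne, ⟨i, h0, h1, h2, h3⟩, hF⟩
  obtain ⟨e10000, e00001, ⟨q1, hq1⟩, ⟨q2, hq2⟩⟩ :=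
    fromX f n hn X hne i h0 h1 h2 h3 hF
  have h9 : Odd 9 := ⟨4, rfl⟩
  have h00000 : f ![false,false,false,false,false] = false := by
    have hc := congrFun (fix_zero f hf 9 h9) 0
    rw [globN] at hc
    simpa [allZeros] using hc
  have hge := glob_ee f h00000 e10000 e00001
  have hOddE : Odd (ones 9 (ww (f ![false,false,false,true,false])
      (f ![false,false,true,false,false]) (f ![false,true,false,false,false]))) := by
    have h := (parity_pres f hf 9 h9 ee).mpr (by decide)
    rwa [hge] at h
  have heef : ∃ x, ee x = false := ⟨1, by decide⟩
  cases ha3 : f ![false,false,false,true,false] <;>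
    cases ha2 : f ![false,false,true,false,false] <;>
      cases ha1 : f ![false,true,false,false,false] <;>
        rw [ha3, ha2, ha1] at hOddE hge
  · exact absurd hOddE (by decide)
  · -- (F,F,T) : single 1 -> shift
    exact no_reach f hf ee ⟨8, Or.inl (hge.trans (by decide))⟩
      ⟨8, Or.inl (hge.trans (by decide))⟩ heef
  · -- (F,T,F)
    exact no_reach f hf ee ⟨0, Or.inl (hge.trans (by decide))⟩
      ⟨0, Or.inl (hge.trans (by decide))⟩ heef
  · exact absurd hOddE (by decide)
  · -- (T,F,F)
    exact no_reach f hf ee ⟨1, Or.inl (hge.trans (by decide))⟩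
      ⟨1, Or.inl (hge.trans (by decide))⟩ heef
  · exact absurd hOddE (by decide)
  · exact absurd hOddE (by decide)
  · -- (T,T,T) : the main case
    cases q1 with
    | false => rw [hq1] at ha1; exact absurd ha1 (by decide)
    | true =>
    cases q2 with
    | false => rw [hq2] at ha3; exact absurd ha3 (by decide)
    | true =>
    have hgc3 := glob_c3 f h00000 e10000 e00001 hq1 hq2
    have hOddC : Odd (ones 9 (ww (f ![false,false,true,true,true])
        (f ![false,true,true,true,false]) (f ![true,true,true,false,false]))) := by
      have h := (parity_pres f hf 9 h9 (ww true true true)).mpr (by decide)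
      rwa [hgc3] at h
    have hgeC : ∃ t, glob 2 9 f ee = sh t ee ∨ glob 2 9 f ee = sh t (ww true true true) :=
      ⟨0, Or.inr (hge.trans (by decide))⟩
    have hYf : ∃ x, ww true true true x = false := ⟨4, by decide⟩
    cases hu : f ![false,false,true,true,true] <;>
      cases hv : f ![false,true,true,true,false] <;>
        cases hw : f ![true,true,true,false,false] <;>
          rw [hu, hv, hw] at hOddC hgc3
    · exact absurd hOddC (by decide)
    · exact no_reach f hf (ww true true true) hgeC
        ⟨8, Or.inl (hgc3.trans (by decide))⟩ hYf
    · exact no_reach f hf (ww true true true) hgeC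
        ⟨0, Or.inl (hgc3.trans (by decide))⟩ hYf
    · exact absurd hOddC (by decide)
    · exact no_reach f hf (ww true true true) hgeC
        ⟨1, Or.inl (hgc3.trans (by decide))⟩ hYf
    · exact absurd hOddC (by decide)
    · exact absurd hOddC (by decide)
    · exact no_reach f hf (ww true true true) hgeC
        ⟨0, Or.inr (hgc3.trans (by decide))⟩ hYf
end

section
/- Let f be a perfect radius-2 parity rule. Then no pre-image of the all-1s configuration can contain four or more consecutive 1s: there is no odd-length configuration X containing the factor 1111 with F(X) equal to the all-1s configuration. -/
/-! ### Auxiliary material -/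

def v5 (a b c d e : Bool) : Fin (2*2+1) → Bool := ![a,b,c,d,e]

def S9 : ZMod 9 → Bool := fun x => decide (x ≠ 0)
def G9 : ZMod 9 → Bool := fun x => decide (x ≠ 0 ∧ x ≠ 1 ∧ x ≠ 8)
def rot9 (v : ZMod 9) (c : ZMod 9 → Bool) : ZMod 9 → Bool := fun x => c (x + v)

lemma rot9_rot9 (v u : ZMod 9) (c : ZMod 9 → Bool) :
    rot9 v (rot9 u c) = rot9 (u + v) c := by
  funext x; show c (x + v + u) = c (x + (u + v)); congr 1; ring

lemma glob_rot9 (f : (Fin (2*2+1) → Bool) → Bool) (v : ZMod 9) (c : ZMod 9 → Bool) :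
    glob 2 9 f (rot9 v c) = rot9 v (glob 2 9 f c) := by
  funext x
  show f _ = f _
  congr 1
  funext j
  show c (x + ((j : ℕ) : ZMod 9) - ((2:ℕ) : ZMod 9) + v)
      = c (x + v + ((j : ℕ) : ZMod 9) - ((2:ℕ) : ZMod 9))
  congr 1
  ring

lemma iter_fixed {α : Type*} (F : α → α) (P : α) (h : F P = P) : ∀ k, F^[k] P = P := by
  intro k
  induction k with
  | zero => rfl
  | succ k ih => rw [Function.iterate_succ_apply, h, ih]

lemma reach {α : Type*} (F : α → α) (P Y : α) (k : ℕ) (hP : F P = P) (hk : F^[k] Y = P)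
    {j : ℕ} (hj : k ≤ j) : F^[j] Y = P := by
  obtain ⟨t, rfl⟩ := Nat.exists_eq_add_of_le hj
  rw [show k + t = t + k by ring, Function.iterate_add_apply, hk, iter_fixed F P hP]

lemma no_two {F : (ZMod 9 → Bool) → (ZMod 9 → Bool)} {Y : ZMod 9 → Bool}
    (h0 : F (allZeros 9) = allZeros 9) (h1 : F (allOnes 9) = allOnes 9)
    (k0 k1 : ℕ) (r0 : F^[k0] Y = allZeros 9) (r1 : F^[k1] Y = allOnes 9) : False := by
  have e0 := reach F _ Y k0 h0 r0 (le_max_left k0 k1)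
  have e1 := reach F _ Y k1 h1 r1 (le_max_right k0 k1)
  rw [e0] at e1
  exact absurd (congrFun e1 0) (by decide)

lemma no_reach_invariant {F : (ZMod 9 → Bool) → (ZMod 9 → Bool)}
    (C : (ZMod 9 → Bool) → Prop) (Y : ZMod 9 → Bool) (hY : C Y)
    (hInv : ∀ c, C c → C (F c)) (hno : ∀ c, C c → c ≠ allZeros 9)
    (k : ℕ) (hk : F^[k] Y = allZeros 9) : False := by
  have hall : ∀ k, C (F^[k] Y) := by
    intro k
    induction k with
    | zero => exact hY
    | succ k ih => rw [Function.iterate_succ_apply']; exact hInv _ ih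
  exact hno _ (hall k) hk

lemma one_zero_case (f : (Fin (2*2+1) → Bool) → Bool) (w : ZMod 9)
    (h : glob 2 9 f S9 = rot9 w S9) (k : ℕ)
    (hk : (glob 2 9 f)^[k] S9 = allZeros 9) : False := by
  apply no_reach_invariant (fun c => ∃ v, c = rot9 v S9) S9 ⟨0, by decide⟩ ?_ ?_ k hk
  · rintro c ⟨v, rfl⟩
    exact ⟨w + v, by rw [glob_rot9, h, rot9_rot9]⟩
  · rintro c ⟨v, rfl⟩ hc
    have h1 := congrFun hc (1 - v)
    simp only [rot9, allZeros] at h1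
    rw [show (1 : ZMod 9) - v + v = 1 by ring] at h1
    exact absurd h1 (by decide)

lemma sg_case (f : (Fin (2*2+1) → Bool) → Bool) (w : ZMod 9)
    (h1 : glob 2 9 f S9 = G9) (h2 : glob 2 9 f G9 = rot9 w S9) (k : ℕ)
    (hk : (glob 2 9 f)^[k] S9 = allZeros 9) : False := by
  apply no_reach_invariant (fun c => (∃ v, c = rot9 v S9) ∨ (∃ v, c = rot9 v G9)) S9
    (Or.inl ⟨0, by decide⟩) ?_ ?_ k hk
  · rintro c (⟨v, rfl⟩ | ⟨v, rfl⟩)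
    · exact Or.inr ⟨v, by rw [glob_rot9, h1]⟩
    · exact Or.inl ⟨w + v, by rw [glob_rot9, h2, rot9_rot9]⟩
  · rintro c (⟨v, rfl⟩ | ⟨v, rfl⟩) hc
    · have hx := congrFun hc (1 - v)
      simp only [rot9, allZeros] at hx
      rw [show (1 : ZMod 9) - v + v = 1 by ring] at hx
      exact absurd hx (by decide)
    · have hx := congrFun hc (2 - v)
      simp only [rot9, allZeros] at hx
      rw [show (2 : ZMod 9) - v + v = 2 by ring] at hx
      exact absurd hx (by decide)

lemma odd_tail_case (f : (Fin (2*2+1) → Bool) → Bool) (hf : PerfectRule 2 f)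
    (Y E : ZMod 9 → Bool) (hYne : Y ≠ allZeros 9) (hodd : Odd (ones 9 E))
    (fix0 : glob 2 9 f (allZeros 9) = allZeros 9)
    (fix1 : glob 2 9 f (allOnes 9) = allOnes 9)
    (h : glob 2 9 f Y = E) (k0 : ℕ)
    (hk0 : (glob 2 9 f)^[k0] Y = allZeros 9) : False := by
  obtain ⟨_, k1, hk1⟩ := (hf 9 ⟨4, by norm_num⟩ E).1 hodd
  rcases k0 with _ | k
  · exact hYne hk0
  · rw [Function.iterate_succ_apply, h] at hk0
    exact no_two fix0 fix1 k k1 hk0 hk1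

lemma findLeft {n : ℕ} [NeZero n] (X : ZMod n → Bool) (i : ZMod n)
    (h0 : X i = true) (h1 : X (i+1) = true) (h2 : X (i+2) = true) (h3 : X (i+3) = true)
    (z : ZMod n) (hz : X z = false) :
    ∃ p : ZMod n, X p = false ∧ X (p+1) = true ∧ X (p+2) = true ∧ X (p+3) = true ∧
      X (p+4) = true := by
  classical
  have hex : ∃ k : ℕ, X (i - (((k+1 : ℕ)) : ZMod n)) = false := by
    refine ⟨(i - z).val - 1, ?_⟩
    have hne : i - z ≠ 0 := by
      rw [sub_ne_zero]
      rintro rfl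
      rw [h0] at hz
      cases hz
    have hv : (i - z).val ≠ 0 := fun h => hne ((ZMod.val_eq_zero _).mp h)
    have hs : ((i - z).val - 1) + 1 = (i - z).val := Nat.succ_pred_eq_of_pos (Nat.pos_of_ne_zero hv)
    rw [hs, ZMod.natCast_rightInverse (i - z)]
    rw [show i - (i - z) = z by ring]
    exact hz
  set K := Nat.find hex + 1 with hK
  have hKf : X (i - (K : ZMod n)) = false := Nat.find_spec hex
  have hmin : ∀ j : ℕ, 1 ≤ j → j < K → X (i - (j : ZMod n)) = true := by
    intro j hj1 hjK
    obtain ⟨j', rfl⟩ : ∃ j', j = j' + 1 := ⟨j - 1, by omega⟩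
    have hnf := Nat.find_min hex (show j' < Nat.find hex by omega)
    revert hnf
    cases hX : X (i - (((j'+1 : ℕ)) : ZMod n))
    · intro hnf; exact absurd rfl hnf
    · intro _; rfl
  have key : ∀ t : ℕ, 1 ≤ t → t ≤ 4 → X (i - (K : ZMod n) + (t : ZMod n)) = true := by
    intro t ht1 ht4
    by_cases htK : t < K
    · have hm := hmin (K - t) (by omega) (by omega)
      rw [show i - (K : ZMod n) + (t : ZMod n) = i - (((K - t : ℕ)) : ZMod n) by
        rw [Nat.cast_sub (by omega : t ≤ K)]; ring]
      exact hm
    · rw [show i - (K : ZMod n) + (t : ZMod n) = i + (((t - K : ℕ)) : ZMod n) by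
        rw [Nat.cast_sub (by omega : K ≤ t)]; ring]
      obtain ⟨d, hd, hdef⟩ : ∃ d, d ≤ 3 ∧ t - K = d := ⟨t - K, by omega, rfl⟩
      rw [hdef]
      interval_cases d
      · simpa using h0
      · simpa using h1
      · rw [show (((2:ℕ)) : ZMod n) = (2 : ZMod n) by push_cast; ring]; exact h2
      · rw [show (((3:ℕ)) : ZMod n) = (3 : ZMod n) by push_cast; ring]; exact h3
  refine ⟨i - (K : ZMod n), hKf, ?_, ?_, ?_, ?_⟩
  · rw [show i - (K : ZMod n) + 1 = i - (K : ZMod n) + ((1:ℕ) : ZMod n) by push_cast; ring]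
    exact key 1 le_rfl (by omega)
  · rw [show i - (K : ZMod n) + 2 = i - (K : ZMod n) + ((2:ℕ) : ZMod n) by push_cast; ring]
    exact key 2 (by omega) (by omega)
  · rw [show i - (K : ZMod n) + 3 = i - (K : ZMod n) + ((3:ℕ) : ZMod n) by push_cast; ring]
    exact key 3 (by omega) (by omega)
  · rw [show i - (K : ZMod n) + 4 = i - (K : ZMod n) + ((4:ℕ) : ZMod n) by push_cast; ring]
    exact key 4 (by omega) (by omega)

/-- The heart of the argument, on the lattice of size 9. -/
lemma main9 (f : (Fin (2*2+1) → Bool) → Bool) (hf : PerfectRule 2 f)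
    (ha : f (v5 false true true true true) = true)
    (he : f (v5 true true true true false) = true)
    (hrB : f (v5 true false true true true) = false →
      f (v5 false false true true true) = true)
    (hrD : f (v5 true true true false true) = false →
      f (v5 true true true false false) = true) : False := by
  have h9 : Odd 9 := ⟨4, by norm_num⟩
  have fix1 : glob 2 9 f (allOnes 9) = allOnes 9 :=
    ((hf 9 h9 (allOnes 9)).1 (Nat.odd_iff.mpr (by decide))).1
  have fix0 : glob 2 9 f (allZeros 9) = allZeros 9 :=
    ((hf 9 h9 (allZeros 9)).2 (Nat.even_iff.mpr (by decide))).1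
  have hT : f (v5 true true true true true) = true := by
    have h := congrFun fix1 (0 : ZMod 9)
    rw [show v5 true true true true true =
      (fun j : Fin (2*2+1) => allOnes 9 ((0 : ZMod 9) + ((j : ℕ) : ZMod 9) - ((2:ℕ) : ZMod 9)))
      from by decide]
    exact h
  have FSwin : ∀ x : ZMod 9,
      (fun j : Fin (2*2+1) => S9 (x + ((j : ℕ) : ZMod 9) - ((2:ℕ) : ZMod 9))) =
      (if x = 0 then v5 true true false true true
       else if x = 1 then v5 true false true true true
       else if x = 8 then v5 true true true false true
       else if x = 2 then v5 false true true true true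
       else if x = 7 then v5 true true true true false
       else v5 true true true true true) := by decide
  have FS : glob 2 9 f S9 = (fun x : ZMod 9 =>
      if x = 0 then f (v5 true true false true true)
      else if x = 1 then f (v5 true false true true true)
      else if x = 8 then f (v5 true true true false true)
      else if x = 2 then f (v5 false true true true true)
      else if x = 7 then f (v5 true true true true false)
      else f (v5 true true true true true)) := by
    funext x
    have h := congrArg f (FSwin x)
    simp only [apply_ite f] at h
    exact h
  simp only [ha, he, hT] at FS
  obtain ⟨_, k0, hk0⟩ := (hf 9 h9 S9).2 (Nat.even_iff.mpr (by decide))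
  have hS9ne : S9 ≠ allZeros 9 := fun h => absurd (congrFun h 1) (by decide)
  cases hB : f (v5 true false true true true) <;>
  cases hC : f (v5 true true false true true) <;>
  cases hD : f (v5 true true true false true) <;>
  simp only [hB, hC, hD] at FS
  -- (b,c,d) = (F,F,F) : the hard case
  · have hr' := hrB hB
    have hr := hrD hD
    have FS1 : glob 2 9 f S9 = G9 := FS.trans (by decide)
    have FGwin : ∀ x : ZMod 9,
        (fun j : Fin (2*2+1) => G9 (x + ((j : ℕ) : ZMod 9) - ((2:ℕ) : ZMod 9))) =
        (if x = 8 then v5 true true false false false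
         else if x = 0 then v5 true false false false true
         else if x = 1 then v5 false false false true true
         else if x = 2 then v5 false false true true true
         else if x = 7 then v5 true true true false false
         else if x = 3 then v5 false true true true true
         else if x = 6 then v5 true true true true false
         else v5 true true true true true) := by decide
    have FG : glob 2 9 f G9 = (fun x : ZMod 9 =>
        if x = 8 then f (v5 true true false false false)
        else if x = 0 then f (v5 true false false false true)
        else if x = 1 then f (v5 false false false true true)
        else if x = 2 then f (v5 false false true true true)
        else if x = 7 then f (v5 true true true false false)
        else if x = 3 then f (v5 false true true true true)
        else if x = 6 then f (v5 true true true true false)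
        else f (v5 true true true true true)) := by
      funext x
      have h := congrArg f (FGwin x)
      simp only [apply_ite f] at h
      exact h
    simp only [ha, he, hT, hr, hr'] at FG
    obtain ⟨_, kg, hkg⟩ := (hf 9 h9 G9).2 (Nat.even_iff.mpr (by decide))
    have hG9ne : G9 ≠ allZeros 9 := fun h => absurd (congrFun h 2) (by decide)
    cases hs : f (v5 true true false false false) <;>
    cases ht : f (v5 true false false false true) <;>
    cases hs' : f (v5 false false false true true) <;>
    simp only [hs, ht, hs'] at FG
    -- (s,t,s') = (F,F,F): G9 is a fixed point
    · rw [iter_fixed _ _ (FG.trans (by decide)) kg] at hkg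
      exact hG9ne hkg
    -- (F,F,T): zeros {8,0} : odd tail
    · exact odd_tail_case f hf G9 (fun x : ZMod 9 => decide (x ≠ 8 ∧ x ≠ 0)) hG9ne
        (Nat.odd_iff.mpr (by decide)) fix0 fix1 (FG.trans (by decide)) kg hkg
    -- (F,T,F): zeros {8,1} : odd tail
    · exact odd_tail_case f hf G9 (fun x : ZMod 9 => decide (x ≠ 8 ∧ x ≠ 1)) hG9ne
        (Nat.odd_iff.mpr (by decide)) fix0 fix1 (FG.trans (by decide)) kg hkg
    -- (F,T,T): zero {8} : G9 ↦ rot9 1 S9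
    · exact sg_case f 1 FS1 (FG.trans (by decide)) k0 hk0
    -- (T,F,F): zeros {0,1} : odd tail
    · exact odd_tail_case f hf G9 (fun x : ZMod 9 => decide (x ≠ 0 ∧ x ≠ 1)) hG9ne
        (Nat.odd_iff.mpr (by decide)) fix0 fix1 (FG.trans (by decide)) kg hkg
    -- (T,F,T): zero {0} : G9 ↦ rot9 0 S9
    · exact sg_case f 0 FS1 (FG.trans (by decide)) k0 hk0
    -- (T,T,F): zero {1} : G9 ↦ rot9 8 S9
    · exact sg_case f 8 FS1 (FG.trans (by decide)) k0 hk0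
    -- (T,T,T): G9 ↦ allOnes
    · have FG1 : glob 2 9 f G9 = allOnes 9 := FG.trans (by decide)
      rcases kg with _ | k
      · exact hG9ne hkg
      · rw [Function.iterate_succ_apply, FG1, iter_fixed _ _ fix1] at hkg
        exact absurd (congrFun hkg 0) (by decide)
  -- (b,c,d) = (F,F,T) : zeros {0,1}
  · exact odd_tail_case f hf S9 (fun x : ZMod 9 => decide (x ≠ 0 ∧ x ≠ 1)) hS9ne
      (Nat.odd_iff.mpr (by decide)) fix0 fix1 (FS.trans (by decide)) k0 hk0
  -- (F,T,F) : zeros {1,8}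
  · exact odd_tail_case f hf S9 (fun x : ZMod 9 => decide (x ≠ 1 ∧ x ≠ 8)) hS9ne
      (Nat.odd_iff.mpr (by decide)) fix0 fix1 (FS.trans (by decide)) k0 hk0
  -- (F,T,T) : zero {1} : S9 ↦ rot9 8 S9
  · exact one_zero_case f 8 (FS.trans (by decide)) k0 hk0
  -- (T,F,F) : zeros {0,8}
  · exact odd_tail_case f hf S9 (fun x : ZMod 9 => decide (x ≠ 0 ∧ x ≠ 8)) hS9ne
      (Nat.odd_iff.mpr (by decide)) fix0 fix1 (FS.trans (by decide)) k0 hk0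
  -- (T,F,T) : zero {0} : S9 fixed
  · exact one_zero_case f 0 (FS.trans (by decide)) k0 hk0
  -- (T,T,F) : zero {8} : S9 ↦ rot9 1 S9
  · exact one_zero_case f 1 (FS.trans (by decide)) k0 hk0
  -- (T,T,T) : S9 ↦ allOnes
  · have FS1 : glob 2 9 f S9 = allOnes 9 := FS.trans (by decide)
    rcases k0 with _ | k
    · exact hS9ne hk0
    · rw [Function.iterate_succ_apply, FS1, iter_fixed _ _ fix1] at hk0
      exact absurd (congrFun hk0 0) (by decide)

/-- for a perfect radius-2 rule, no (non-trivial) odd-length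
configuration containing four consecutive 1s is a pre-image of the 1-configuration. -/
theorem stmt10 (f : (Fin (2*2+1) → Bool) → Bool) (hf : PerfectRule 2 f) :
    ¬ ∃ (n : ℕ), Odd n ∧ ∃ X : ZMod n → Bool, X ≠ allOnes n ∧
      (∃ i : ZMod n, X i = true ∧ X (i+1) = true ∧ X (i+2) = true ∧
        X (i+3) = true) ∧
      glob 2 n f X = allOnes n := by
  rintro ⟨n, hn, X, hXne, ⟨i, h0i, h1i, h2i, h3i⟩, hFX⟩
  haveI : NeZero n := ⟨by rcases hn with ⟨m, rfl⟩; omega⟩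
  have hw : ∀ z : ZMod n,
      f (fun j : Fin (2*2+1) => X (z + ((j : ℕ) : ZMod n) - ((2:ℕ) : ZMod n))) = true :=
    fun z => congrFun hFX z
  -- some cell is 0
  obtain ⟨z, hz⟩ : ∃ z : ZMod n, X z = false := by
    by_contra h
    push_neg at h
    exact hXne (funext fun x => by
      cases hx : X x
      · exact absurd hx (h x)
      · rfl)
  -- left pattern 01111
  obtain ⟨p, hp0, hp1, hp2, hp3, hp4⟩ := findLeft X i h0i h1i h2i h3i z hz
  -- right pattern 11110, via reflection
  obtain ⟨p', k0', k1', k2', k3', k4'⟩ :=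
    findLeft (fun y => X (-y)) (-(i+3))
      (by show X (-(-(i+3))) = true; rw [show -(-(i+3)) = i + 3 by ring]; exact h3i)
      (by show X (-(-(i+3)+1)) = true; rw [show -(-(i+3)+1) = i + 2 by ring]; exact h2i)
      (by show X (-(-(i+3)+2)) = true; rw [show -(-(i+3)+2) = i + 1 by ring]; exact h1i)
      (by show X (-(-(i+3)+3)) = true; rw [show -(-(i+3)+3) = i by ring]; exact h0i)
      (-z) (by show X (-(-z)) = false; rw [neg_neg]; exact hz)
  set q : ZMod n := -(p' + 4) with hqdef
  have hq0 : X q = true := k4'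
  have hq1 : X (q + 1) = true := by
    show X (-(p'+4) + 1) = true
    rw [show -(p'+4) + 1 = -(p'+3) by ring]
    exact k3'
  have hq2 : X (q + 2) = true := by
    show X (-(p'+4) + 2) = true
    rw [show -(p'+4) + 2 = -(p'+2) by ring]
    exact k2'
  have hq3 : X (q + 3) = true := by
    show X (-(p'+4) + 3) = true
    rw [show -(p'+4) + 3 = -(p'+1) by ring]
    exact k1'
  have hq4 : X (q + 4) = false := by
    show X (-(p'+4) + 4) = false
    rw [show -(p'+4) + 4 = -p' by ring]
    exact k0'
  -- window lemma helper
  have hwin : ∀ (z0 : ZMod n) (v : Fin (2*2+1) → Bool),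
      (X z0 = v 0) → (X (z0+1) = v 1) → (X (z0+2) = v 2) → (X (z0+3) = v 3) →
      (X (z0+4) = v 4) →
      (fun j : Fin (2*2+1) => X (z0 + 2 + ((j : ℕ) : ZMod n) - ((2:ℕ) : ZMod n))) = v := by
    intro z0 v e0 e1 e2 e3 e4
    funext j
    fin_cases j
    · rw [show z0 + 2 + ((0:ℕ) : ZMod n) - ((2:ℕ) : ZMod n) = z0 by push_cast; ring]; exact e0
    · rw [show z0 + 2 + ((1:ℕ) : ZMod n) - ((2:ℕ) : ZMod n) = z0 + 1 by push_cast; ring]; exact e1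
    · rw [show z0 + 2 + ((2:ℕ) : ZMod n) - ((2:ℕ) : ZMod n) = z0 + 2 by push_cast; ring]; exact e2
    · rw [show z0 + 2 + ((3:ℕ) : ZMod n) - ((2:ℕ) : ZMod n) = z0 + 3 by push_cast; ring]; exact e3
    · rw [show z0 + 2 + ((4:ℕ) : ZMod n) - ((2:ℕ) : ZMod n) = z0 + 4 by push_cast; ring]; exact e4
  have ha : f (v5 false true true true true) = true := by
    rw [← hwin p (v5 false true true true true) hp0 hp1 hp2 hp3 hp4]
    exact hw (p + 2)
  have he : f (v5 true true true true false) = true := by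
    rw [← hwin q (v5 true true true true false) hq0 hq1 hq2 hq3 hq4]
    exact hw (q + 2)
  have hrB : f (v5 true false true true true) = false →
      f (v5 false false true true true) = true := by
    intro hb
    have hpm : X (p - 1) = false := by
      cases hXp : X (p - 1)
      · rfl
      · exfalso
        have hwb := hwin (p-1) (v5 true false true true true) hXp
          (by rw [show p - 1 + 1 = p by ring]; exact hp0)
          (by rw [show p - 1 + 2 = p + 1 by ring]; exact hp1)
          (by rw [show p - 1 + 3 = p + 2 by ring]; exact hp2)
          (by rw [show p - 1 + 4 = p + 3 by ring]; exact hp3)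
        have hcontr := hw (p - 1 + 2)
        rw [hwb, hb] at hcontr
        cases hcontr
    have hwb := hwin (p-1) (v5 false false true true true) hpm
      (by rw [show p - 1 + 1 = p by ring]; exact hp0)
      (by rw [show p - 1 + 2 = p + 1 by ring]; exact hp1)
      (by rw [show p - 1 + 3 = p + 2 by ring]; exact hp2)
      (by rw [show p - 1 + 4 = p + 3 by ring]; exact hp3)
    rw [← hwb]
    exact hw (p - 1 + 2)
  have hrD : f (v5 true true true false true) = false →
      f (v5 true true true false false) = true := by
    intro hd
    have hqm : X (q + 5) = false := by
      cases hXq : X (q + 5)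
      · rfl
      · exfalso
        have hwb := hwin (q+1) (v5 true true true false true) hq1
          (by rw [show q + 1 + 1 = q + 2 by ring]; exact hq2)
          (by rw [show q + 1 + 2 = q + 3 by ring]; exact hq3)
          (by rw [show q + 1 + 3 = q + 4 by ring]; exact hq4)
          (by rw [show q + 1 + 4 = q + 5 by ring]; exact hXq)
        have hcontr := hw (q + 1 + 2)
        rw [hwb, hd] at hcontr
        cases hcontr
    have hwb := hwin (q+1) (v5 true true true false false) hq1
      (by rw [show q + 1 + 1 = q + 2 by ring]; exact hq2)
      (by rw [show q + 1 + 2 = q + 3 by ring]; exact hq3)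
      (by rw [show q + 1 + 3 = q + 4 by ring]; exact hq4)
      (by rw [show q + 1 + 4 = q + 5 by ring]; exact hqm)
    rw [← hwb]
    exact hw (q + 1 + 2)
  exact main9 f hf ha he hrB hrD
end

section
/- The BFO rule of radius 4 is parity preserving: for every odd n and every configuration X ∈ {0,1}^n, the number of 1s in F(X) is congruent modulo 2 to the number of 1s in X. -/
/-- The BFO radius-4 rule (the centre cell is `v 4`); the twelve active
transitions T1–T12, every other neighbourhood returns the centre bit. -/
def bfo (v : Fin 9 → Bool) : Bool :=
  let a := v 0; let b := v 1; let c := v 2; let d := v 3; let e := v 4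
  let g := v 5; let h := v 6; let i := v 7; let j := v 8
  if b && c && d && !e && !g then true              -- T1
  else if a && b && c && !d && !e then true         -- T2
  else if !b && !c && d && !e && !g then true       -- T3
  else if !a && !b && c && !d && !e then true       -- T4
  else if !c && d && !e && g && !h && !i then true  -- T7
  else if !d && e && g && !h then false             -- T5
  else if !c && d && e && !g then false             -- T6
  else if !b && c && !d && e && !g && !h then false -- T8
  else if d && e && g && !h && i then false         -- T9
  else if a && b && c && !d && e && !g then false   -- T10
  else if a && b && c && !d && e && g && h then false -- T11
  else if c && d && e && !g && h && i && !j then false -- T12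
  else e

def phi (w : Fin 8 → Bool) : Bool :=
  (227485468729828477345063128545183061179958168338074628132913794865800675472 : ℕ).testBit
    ((w 0).toNat + 2*(w 1).toNat + 4*(w 2).toNat + 8*(w 3).toNat + 16*(w 4).toNat
      + 32*(w 5).toNat + 64*(w 6).toNat + 128*(w 7).toNat)

set_option maxRecDepth 100000 in
theorem bfo_key : ∀ v : Fin 9 → Bool,
    xor (bfo v) (v 4) = xor (phi (fun j => v j.castSucc)) (phi (fun j => v j.succ)) := by
  decide

def b2 (b : Bool) : ZMod 2 := if b then 1 else 0

theorem b2_xor (a b : Bool) : b2 (xor a b) = b2 a + b2 b := by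
  cases a <;> cases b <;> decide

theorem ones_card (n : ℕ) [NeZero n] (X : ZMod n → Bool) :
    ones n X = (Finset.univ.filter fun i : ZMod n => X i = true).card := by
  apply Finset.card_bij' (fun i _ => ((i : ℕ) : ZMod n)) (fun z _ => z.val)
  · intro i hi
    simp only [Finset.mem_filter, Finset.mem_range] at hi ⊢
    exact ⟨Finset.mem_univ _, hi.2⟩
  · intro z hz
    simp only [Finset.mem_filter, Finset.mem_range] at hz ⊢
    refine ⟨ZMod.val_lt z, ?_⟩
    rw [ZMod.natCast_rightInverse z]
    exact hz.2
  · intro i hi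
    simp only [Finset.mem_filter, Finset.mem_range] at hi
    exact ZMod.val_natCast_of_lt hi.1
  · intro z hz
    exact ZMod.natCast_rightInverse z

theorem ones_zmod2 (n : ℕ) [NeZero n] (X : ZMod n → Bool) :
    ((ones n X : ℕ) : ZMod 2) = ∑ i : ZMod n, b2 (X i) := by
  rw [ones_card, Finset.card_filter]
  push_cast
  apply Finset.sum_congr rfl
  intro i _
  by_cases h : X i = true <;> simp [h, b2]


/-- the BFO rule is parity preserving on odd-sized lattices. -/
theorem stmt14 (n : ℕ) (hn : Odd n) (X : ZMod n → Bool) :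
    ones n (glob 4 n bfo X) ≡ ones n X [MOD 2] := by

  haveI : NeZero n := ⟨by rcases hn with ⟨k, hk⟩; omega⟩
  rw [← ZMod.natCast_eq_natCast_iff]
  set F := glob 4 n bfo X with hF
  -- window functions
  set W : ZMod n → Fin 9 → Bool := fun i j => X (i + ((j : ℕ) : ZMod n) - 4) with hW
  set Wl : ZMod n → Fin 8 → Bool := fun i j => X (i + ((j : ℕ) : ZMod n) - 4) with hWl
  have hFi : ∀ i, F i = bfo (W i) := fun i => rfl
  have hXi : ∀ i, X i = W i 4 := by
    intro i
    simp only [hW, show (((4 : Fin 9) : ℕ) : ZMod n) = 4 from by rw [show ((4 : Fin 9) : ℕ) = 4 from rfl]; norm_num,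
      add_sub_cancel_right]
  have hleft : ∀ i, (fun j : Fin 8 => W i j.castSucc) = Wl i := by
    intro i; funext j; simp [hW, hWl]
  have hright : ∀ i, (fun j : Fin 8 => W i j.succ) = Wl (i + 1) := by
    intro i; funext j
    simp only [hW, hWl, Fin.val_succ]
    congr 1
    push_cast
    ring
  have pointwise : ∀ i : ZMod n, b2 (F i) + b2 (X i)
      = b2 (phi (Wl i)) + b2 (phi (Wl (i + 1))) := by
    intro i
    rw [← b2_xor, hFi, hXi, bfo_key (W i), hleft, hright, b2_xor]
  have hsum : ((ones n F : ℕ) : ZMod 2) + ((ones n X : ℕ) : ZMod 2) = 0 := by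
    rw [ones_zmod2, ones_zmod2, ← Finset.sum_add_distrib]
    rw [Finset.sum_congr rfl (fun i _ => pointwise i), Finset.sum_add_distrib]
    have : ∑ i : ZMod n, b2 (phi (Wl (i + 1))) = ∑ i : ZMod n, b2 (phi (Wl i)) :=
      Fintype.sum_equiv (Equiv.addRight (1 : ZMod n)) _ _ (fun i => rfl)
    rw [this, ← two_mul, show (2 : ZMod 2) = 0 from rfl, zero_mul]
  have h2 : ((ones n F : ℕ) : ZMod 2) = ((ones n X : ℕ) : ZMod 2) := by
    have := hsum
    have hx : ((ones n X : ℕ) : ZMod 2) + ((ones n X : ℕ) : ZMod 2) = 0 := by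
      rw [← two_mul, show (2 : ZMod 2) = 0 from rfl, zero_mul]
    calc ((ones n F : ℕ) : ZMod 2)
        = ((ones n F : ℕ) : ZMod 2) + (((ones n X : ℕ) : ZMod 2) + ((ones n X : ℕ) : ZMod 2)) := by rw [hx, add_zero]
      _ = (((ones n F : ℕ) : ZMod 2) + ((ones n X : ℕ) : ZMod 2)) + ((ones n X : ℕ) : ZMod 2) := by ring
      _ = ((ones n X : ℕ) : ZMod 2) := by rw [hsum, zero_add]
  exact h2
end

section
/- The only fixed points of the BFO rule on circular lattices of odd size are the two homogeneous configurations: if X ∈ {0,1}^n, n odd, and F(X) = X, then X is all 0s or all 1s. -/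
def rtab : List ℕ := [18, 19, 20, 20, 0, 21, 21, 0, 0, 0, 22, 22, 22, 22, 0, 0, 1, 1, 1, 1, 0, 0, 23, 0, 0, 0, 0, 0, 1, 1, 1, 1, 2, 2, 2, 2, 0, 2, 2, 0, 0, 0, 0, 0, 24, 24, 1, 1, 0, 0, 0, 0, 0, 0, 0, 0, 2, 2, 2, 2, 2, 2, 2, 2, 16, 16, 16, 16, 0, 16, 16, 0, 0, 0, 16, 16, 16, 16, 0, 0, 14, 14, 14, 14, 12, 11, 13, 0, 0, 0, 0, 0, 2, 2, 2, 2, 1, 1, 1, 1, 0, 1, 1, 0, 1, 1, 1, 1, 1, 1, 1, 1, 3, 3, 3, 3, 3, 3, 3, 0, 3, 3, 3, 3, 3, 3, 3, 3, 17, 17, 17, 17, 0, 17, 17, 0, 0, 0, 17, 17, 17, 17, 0, 0, 1, 1, 1, 1, 0, 0, 17, 0, 0, 0, 0, 0, 1, 1, 1, 1, 15, 15, 15, 15, 0, 15, 15, 0, 13, 13, 11, 12, 14, 14, 1, 1, 0, 0, 0, 0, 0, 0, 0, 0, 0, 0, 0, 0, 0, 0, 0, 0, 10, 10, 10, 10,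 0, 10, 10, 0, 0, 0, 10, 10, 10, 10, 0, 0, 10, 10, 10, 10, 10, 10, 10, 0, 0, 0, 0, 0, 2, 2, 2, 2, 9, 9, 9, 9, 0, 9, 9, 0, 9, 9, 9, 9, 9, 9, 1, 1, 8, 8, 8, 8, 8, 8, 8, 0, 7, 7, 7, 7, 6, 6, 5, 4]

def enc (v : Fin 8 → Bool) : ℕ :=
  (cond (v 0) 1 0) + 2*(cond (v 1) 1 0) + 4*(cond (v 2) 1 0) + 8*(cond (v 3) 1 0)
  + 16*(cond (v 4) 1 0) + 32*(cond (v 5) 1 0) + 64*(cond (v 6) 1 0) + 128*(cond (v 7) 1 0)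

def rk (v : Fin 8 → Bool) : ℕ := rtab.getD (enc v) 0

def hd9 (v : Fin 9 → Bool) : Fin 8 → Bool := fun j => v j.castSucc
def tl9 (v : Fin 9 → Bool) : Fin 8 → Bool := fun j => v j.succ

def cZ : Fin 8 → Bool := fun _ => false
def cO : Fin 8 → Bool := fun _ => true
def cA : Fin 8 → Bool := fun j => decide ((j : ℕ) % 2 = 1)
def cB : Fin 8 → Bool := fun j => decide ((j : ℕ) % 2 = 0)

def inC (v : Fin 8 → Bool) : Prop := v = cZ ∨ v = cO ∨ v = cA ∨ v = cB

instance : DecidablePred inC := fun v => inferInstanceAs (Decidable (_ ∨ _))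

set_option maxRecDepth 10000 in
theorem key : ∀ v : Fin 9 → Bool, bfo v = v 4 →
    rk (tl9 v) ≤ rk (hd9 v) ∧ (¬ inC (hd9 v) → rk (tl9 v) < rk (hd9 v)) := by
  decide

/-- the only fixed points of the BFO rule on odd-sized circular
lattices are the homogeneous configurations. -/
theorem stmt15 (n : ℕ) (hn : Odd n) (X : ZMod n → Bool)
    (hfix : glob 4 n bfo X = X) :
    X = allZeros n ∨ X = allOnes n := by
  have hn0 : 0 < n := hn.pos
  haveI : NeZero n := ⟨hn0.ne'⟩
  -- the sliding 8-windows
  set w : ZMod n → Fin 8 → Bool := fun i j => X (i + ((j : ℕ) : ZMod n)) with hw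
  -- quiescence of every 9-window
  have hq : ∀ i : ZMod n, bfo (fun j : Fin 9 => X (i + ((j : ℕ) : ZMod n))) =
      X (i + 4) := by
    intro i
    have h := congrFun hfix (i + 4)
    simp only [glob] at h
    have harg : (fun j : Fin 9 => X (i + 4 + ((j : ℕ) : ZMod n) - ((4 : ℕ) : ZMod n)))
        = fun j : Fin 9 => X (i + ((j : ℕ) : ZMod n)) := by
      funext j; congr 1; push_cast; ring
    rw [harg] at h
    exact h
  -- head/tail of the 9-window at i are w i and w (i+1)
  have hhd : ∀ i : ZMod n, hd9 (fun j : Fin 9 => X (i + ((j : ℕ) : ZMod n))) = w i := by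
    intro i; funext j; simp [hd9, hw]
  have htl : ∀ i : ZMod n, tl9 (fun j : Fin 9 => X (i + ((j : ℕ) : ZMod n))) = w (i + 1) := by
    intro i; funext j
    simp only [tl9, hw, Fin.val_succ]
    congr 1; push_cast; ring
  have hq' : ∀ i : ZMod n, bfo (fun j : Fin 9 => X (i + ((j : ℕ) : ZMod n))) =
      (fun j : Fin 9 => X (i + ((j : ℕ) : ZMod n))) 4 := by
    intro i
    have h4 : ((4 : Fin 9) : ℕ) = 4 := rfl
    show bfo _ = X (_ + (((4 : Fin 9) : ℕ) : ZMod n))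
    rw [h4, hq i]
    norm_num
  have hk : ∀ i : ZMod n, rk (w (i + 1)) ≤ rk (w i) ∧
      (¬ inC (w i) → rk (w (i + 1)) < rk (w i)) := by
    intro i
    have := key _ (hq' i)
    rwa [hhd i, htl i] at this
  -- every window lies in C
  have hall : ∀ i : ZMod n, inC (w i) := by
    by_contra hc
    push_neg at hc
    obtain ⟨i0, hi0⟩ := hc
    have hsum : (∑ i : ZMod n, rk (w (i + 1))) = ∑ i : ZMod n, rk (w i) :=
      Fintype.sum_equiv (Equiv.addRight 1) _ _ (fun i => rfl)
    have hlt : (∑ i : ZMod n, rk (w (i + 1))) < ∑ i : ZMod n, rk (w i) :=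
      Finset.sum_lt_sum (fun i _ => (hk i).1) ⟨i0, Finset.mem_univ _, (hk i0).2 hi0⟩
    exact absurd hsum hlt.ne
  -- values of w at 0,1,2 and shifting
  have hwv : ∀ (i : ZMod n) (j : Fin 8), w i j = X (i + ((j : ℕ) : ZMod n)) := fun _ _ => rfl
  have hsh : ∀ (i : ZMod n) (j : Fin 8) (j' : Fin 8), ((j : ℕ) + 1 = (j' : ℕ)) →
      w (i + 1) j = w i j' := by
    intro i j j' hjj
    rw [hwv, hwv]
    congr 1
    have : ((j' : ℕ) : ZMod n) = ((j : ℕ) : ZMod n) + 1 := by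
      rw [← hjj]; push_cast; ring
    rw [this]; ring
  have hsh0 : ∀ i : ZMod n, w (i + 1) 0 = w i 1 := fun i => hsh i 0 1 rfl
  have hsh1 : ∀ i : ZMod n, w (i + 1) 1 = w i 2 := fun i => hsh i 1 2 rfl
  -- evaluate the four C-elements at 0,1
  have hcZ0 : cZ 0 = false := rfl
  have hcZ1 : cZ 1 = false := rfl
  have hcO0 : cO 0 = true := rfl
  have hcO1 : cO 1 = true := rfl
  have hcA0 : cA 0 = false := rfl
  have hcA1 : cA 1 = true := rfl
  have hcA2 : cA 2 = false := rfl
  have hcB0 : cB 0 = true := rfl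
  have hcB1 : cB 1 = false := rfl
  have hcB2 : cB 2 = true := rfl
  -- determination of a C-element by its first two values
  have hdet : ∀ v : Fin 8 → Bool, inC v →
      (v 0 = false → v 1 = false → v = cZ) ∧
      (v 0 = true → v 1 = true → v = cO) ∧
      (v 0 = false → v 1 = true → v = cA) ∧
      (v 0 = true → v 1 = false → v = cB) := by
    intro v hv
    rcases hv with h | h | h | h <;> subst h <;>
      refine ⟨?_, ?_, ?_, ?_⟩ <;> intro h0 h1 <;> simp_all [cZ, cO, cA, cB]
  -- propagation lemmas
  have stepZ : ∀ i : ZMod n, w i = cZ → w (i + 1) = cZ := by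
    intro i hi
    refine (hdet _ (hall (i + 1))).1 ?_ ?_
    · rw [hsh0, hi, hcZ1]
    · rw [hsh1, hi]; rfl
  have stepO : ∀ i : ZMod n, w i = cO → w (i + 1) = cO := by
    intro i hi
    refine (hdet _ (hall (i + 1))).2.1 ?_ ?_
    · rw [hsh0, hi, hcO1]
    · rw [hsh1, hi]; rfl
  have stepA : ∀ i : ZMod n, w i = cA → w (i + 1) = cB := by
    intro i hi
    refine (hdet _ (hall (i + 1))).2.2.2 ?_ ?_
    · rw [hsh0, hi, hcA1]
    · rw [hsh1, hi, hcA2]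
  have stepB : ∀ i : ZMod n, w i = cB → w (i + 1) = cA := by
    intro i hi
    refine (hdet _ (hall (i + 1))).2.2.1 ?_ ?_
    · rw [hsh0, hi, hcB1]
    · rw [hsh1, hi, hcB2]
  -- X i from w
  have hX0 : ∀ i : ZMod n, X i = w i 0 := by
    intro i; rw [hwv]; norm_num
  have hX1 : ∀ i : ZMod n, X (i + 1) = w i 1 := by
    intro i; rw [hwv]; norm_num
  have hcastval : ∀ i : ZMod n, ((i.val : ℕ) : ZMod n) = i := by
    intro i; simp [ZMod.natCast_val, ZMod.cast_id]
  rcases hall 0 with h0 | h0 | h0 | h0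
  · -- all zeros
    left
    have hconst : ∀ k : ℕ, w ((k : ℕ) : ZMod n) = cZ := by
      intro k; induction k with
      | zero => simpa using h0
      | succ k ih => push_cast; exact stepZ _ ih
    funext i
    have := hconst i.val
    rw [hcastval i] at this
    rw [hX0 i, this]; rfl
  · -- all ones
    right
    have hconst : ∀ k : ℕ, w ((k : ℕ) : ZMod n) = cO := by
      intro k; induction k with
      | zero => simpa using h0
      | succ k ih => push_cast; exact stepO _ ih
    funext i
    have := hconst i.val
    rw [hcastval i] at this
    rw [hX0 i, this]; rfl
  all_goals {
    -- alternating: contradiction with odd n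
    exfalso
    have halt : ∀ i : ZMod n, w i = cA ∨ w i = cB → X (i + 1) = !(X i) := by
      intro i hi
      rcases hi with h | h <;> rw [hX1, hX0, h] <;> rfl
    have hAB : ∀ k : ℕ, w ((k : ℕ) : ZMod n) = cA ∨ w ((k : ℕ) : ZMod n) = cB := by
      intro k; induction k with
      | zero => simp only [Nat.cast_zero]; first | exact Or.inl h0 | exact Or.inr h0
      | succ k ih =>
        push_cast
        rcases ih with h | h
        · exact Or.inr (stepA _ h)
        · exact Or.inl (stepB _ h)
    have hpar : ∀ k : ℕ, X ((k : ℕ) : ZMod n) =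
        (if Even k then X 0 else !(X 0)) := by
      intro k; induction k with
      | zero => simp
      | succ k ih =>
        have hstep := halt ((k : ℕ) : ZMod n) (hAB k)
        push_cast
        rw [hstep, ih]
        rcases Nat.even_or_odd k with he | ho
        · simp [he, Nat.even_add_one, he]
        · simp [Nat.not_even_iff_odd.mpr ho, Nat.even_add_one,
            Nat.not_even_iff_odd.mpr ho]
    have hcon := hpar n
    rw [ZMod.natCast_self] at hcon
    rw [if_neg (Nat.not_even_iff_odd.mpr hn)] at hcon
    cases hX : X (0 : ZMod n) <;> rw [hX] at hcon <;> simp at hcon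
  }
end
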